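/- arXiv:1704.00151 — 5 statements merged into one kernel-verified Lean document; each statement's English description precedes it below -/
import Mathlib

section
/- For all positive integers m and n: n divides gcd(m, F_m) if and only if lcm(n, z(n)) divides m. -/
/-- Rank of appearance of `n` in the Fibonacci sequence. -/
noncomputable def zf (n : ℕ) : ℕ := sInf {k | 0 < k ∧ n ∣ Nat.fib k}

noncomputable def ellf (n : ℕ) : ℕ := Nat.lcm n (zf n)

def gf (n : ℕ) : ℕ := Nat.gcd n (Nat.fib n)

def Afib : Set ℕ := {m | ∃ n : ℕ, 0 < n ∧ gf n = m}

private lemma fibZ_rec (n i : ℕ) :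
    ((Nat.fib (i + 2) : ℕ) : ZMod n) = (Nat.fib i : ZMod n) + (Nat.fib (i + 1) : ZMod n) := by
  rw [Nat.fib_add_two]; push_cast; ring

private lemma shift_down (n : ℕ) :
    ∀ i d : ℕ, ((Nat.fib i : ℕ) : ZMod n) = (Nat.fib (i + d) : ZMod n) →
      ((Nat.fib (i + 1) : ℕ) : ZMod n) = (Nat.fib (i + 1 + d) : ZMod n) →
      ((Nat.fib 0 : ℕ) : ZMod n) = (Nat.fib d : ZMod n) := by
  intro i
  induction i with
  | zero => intro d h _; simpa using h
  | succ i ih =>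
    intro d h1 h2
    rw [show i + 1 + 1 = i + 2 from rfl, show i + 1 + 1 + d = i + 2 + d from rfl] at h2
    have key : ((Nat.fib i : ℕ) : ZMod n) = (Nat.fib (i + d) : ZMod n) := by
      have r1 := fibZ_rec n i
      have r2 := fibZ_rec n (i + d)
      rw [show i + d + 2 = i + 2 + d by omega, show i + d + 1 = i + 1 + d by omega] at r2
      linear_combination -r1 + r2 + h2 - h1
    exact ih d key h1

private lemma exists_fib_dvd (n : ℕ) (hn : 0 < n) : ∃ k, 0 < k ∧ n ∣ Nat.fib k := by
  haveI : NeZero n := ⟨hn.ne'⟩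
  obtain ⟨x, y, hxy, hf⟩ := Finite.exists_ne_map_eq_of_infinite
    (fun k : ℕ => (((Nat.fib k : ℕ) : ZMod n), ((Nat.fib (k + 1) : ℕ) : ZMod n)))
  wlog hlt : x < y generalizing x y
  · exact this y x hxy.symm hf.symm (by omega)
  obtain ⟨h1, h2⟩ := Prod.mk.injEq .. ▸ hf
  refine ⟨y - x, by omega, ?_⟩
  have := shift_down n x (y - x) (by rw [show x + (y - x) = y by omega]; exact h1)
    (by rw [show x + 1 + (y - x) = y + 1 by omega]; exact h2)
  simpa [Nat.fib_zero, eq_comm, ZMod.natCast_eq_zero_iff] using this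

private lemma zf_mem (n : ℕ) (hn : 0 < n) : 0 < zf n ∧ n ∣ Nat.fib (zf n) :=
  Nat.sInf_mem (exists_fib_dvd n hn)

private lemma dvd_fib_iff (n : ℕ) (hn : 0 < n) (k : ℕ) : n ∣ Nat.fib k ↔ zf n ∣ k := by
  obtain ⟨hz, hzd⟩ := zf_mem n hn
  constructor
  · intro h
    rcases Nat.eq_zero_or_pos k with rfl | hk
    · exact dvd_zero _
    have hg : n ∣ Nat.fib (Nat.gcd (zf n) k) := by
      rw [Nat.fib_gcd]; exact Nat.dvd_gcd hzd h
    have hgpos : 0 < Nat.gcd (zf n) k := Nat.gcd_pos_of_pos_right _ hk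
    have hle : zf n ≤ Nat.gcd (zf n) k := Nat.sInf_le ⟨hgpos, hg⟩
    have hge : Nat.gcd (zf n) k ≤ zf n := Nat.le_of_dvd hz (Nat.gcd_dvd_left _ _)
    have : Nat.gcd (zf n) k = zf n := le_antisymm hge hle
    rw [← this]; exact Nat.gcd_dvd_right _ _
  · intro h
    exact dvd_trans hzd (Nat.fib_dvd _ _ h)

theorem stmt4 (m n : ℕ) (hm : 0 < m) (hn : 0 < n) :
    n ∣ gf m ↔ ellf n ∣ m := by
  unfold gf ellf
  rw [Nat.dvd_gcd_iff, Nat.lcm_dvd_iff, dvd_fib_iff n hn m]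
end

section
/- For every real γ > 0 and all x ≥ 2, the number of primes p ≤ x with z(p) < p^γ is O_γ(x^{2γ}). -/
/-- The Fibonacci shift as an equivalence on pairs. -/
def fibShift (R : Type*) [AddCommGroup R] : (R × R) ≃ (R × R) where
  toFun := fun ab => (ab.2, ab.1 + ab.2)
  invFun := fun ab => (ab.2 - ab.1, ab.1)
  left_inv := by intro ab; simp
  right_inv := by intro ab; simp

lemma fibShift_iterate (R : Type*) [AddCommGroup R] (f : ℕ → R)
    (h0 : ∀ k, f (k + 2) = f k + f (k + 1)) (k : ℕ) :
    (fibShift R)^[k] (f 0, f 1) = (f k, f (k + 1)) := by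
  induction k with
  | zero => rfl
  | succ n ih =>
    rw [Function.iterate_succ_apply', ih]
    simp [fibShift, ← h0 n]

lemma exists_entry (p : ℕ) (hp : p.Prime) : ∃ k, 0 < k ∧ p ∣ Nat.fib k := by
  haveI : Fact p.Prime := ⟨hp⟩
  set e : Equiv.Perm (ZMod p × ZMod p) := fibShift (ZMod p)
  have hfin : IsOfFinOrder e := isOfFinOrder_of_finite e
  refine ⟨orderOf e, hfin.orderOf_pos, ?_⟩
  have key : e^[orderOf e] ((Nat.fib 0 : ZMod p), (Nat.fib 1 : ZMod p))
      = ((Nat.fib (orderOf e) : ZMod p), (Nat.fib (orderOf e + 1) : ZMod p)) := by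
    exact fibShift_iterate (ZMod p) (fun k => (Nat.fib k : ZMod p))
      (by intro k; push_cast [Nat.fib_add_two]; ring) (orderOf e)
  rw [Equiv.Perm.iterate_eq_pow, pow_orderOf_eq_one] at key
  simp only [Nat.fib_zero, Nat.fib_one, Nat.cast_zero, Nat.cast_one,
    Equiv.Perm.coe_one, id_eq] at key
  have : (Nat.fib (orderOf e) : ZMod p) = 0 := by
    have := congrArg Prod.fst key
    simpa using this.symm
  exact (ZMod.natCast_eq_zero_iff _ _).mp this

lemma zf_spec (p : ℕ) (hp : p.Prime) : 0 < zf p ∧ p ∣ Nat.fib (zf p) := by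
  have h := exists_entry p hp
  exact Nat.sInf_mem (s := {k | 0 < k ∧ p ∣ Nat.fib k}) h

lemma fib_le_two_pow (n : ℕ) : Nat.fib n ≤ 2 ^ n := by
  induction n using Nat.strong_induction_on with
  | _ n ih =>
    match n with
    | 0 => simp
    | 1 => simp
    | (m + 2) =>
      rw [Nat.fib_add_two]
      calc Nat.fib m + Nat.fib (m + 1) ≤ 2 ^ m + 2 ^ (m + 1) := by
            exact Nat.add_le_add (ih m (by omega)) (ih (m + 1) (by omega))
        _ ≤ 2 ^ (m + 2) := by ring_nf; omega

lemma two_pow_primeFactors_le (m : ℕ) (hm : 0 < m) :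
    2 ^ m.primeFactors.card ≤ m := by
  calc 2 ^ m.primeFactors.card = ∏ _p ∈ m.primeFactors, 2 := by
        rw [Finset.prod_const]
    _ ≤ ∏ p ∈ m.primeFactors, p := by
        apply Finset.prod_le_prod' 
        intro p hp
        exact (Nat.prime_of_mem_primeFactors hp).two_le
    _ ≤ m := Nat.le_of_dvd hm (Nat.prod_primeFactors_dvd m)

theorem stmt10 (γ : ℝ) (hγ : 0 < γ) :
    ∃ C : ℝ, 0 < C ∧ ∀ x : ℝ, 2 ≤ x →
      (((Finset.Icc 1 ⌊x⌋₊).filter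
          (fun p => p.Prime ∧ (zf p : ℝ) < (p : ℝ) ^ γ)).card : ℝ) ≤ C * x ^ (2 * γ) := by
  refine ⟨1, one_pos, fun x hx => ?_⟩
  have hx0 : (0:ℝ) < x := lt_of_lt_of_le two_pos hx
  set N : ℕ := ⌊x ^ γ⌋₊ with hN
  set S := (Finset.Icc 1 ⌊x⌋₊).filter
      (fun p => p.Prime ∧ (zf p : ℝ) < (p : ℝ) ^ γ) with hS
  -- every p in S has zf p ∈ Icc 1 N
  have hmem : ∀ p ∈ S, zf p ∈ Finset.Icc 1 N := by
    intro p hp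
    rw [hS, Finset.mem_filter, Finset.mem_Icc] at hp
    obtain ⟨⟨hp1, hpx⟩, hprime, hlt⟩ := hp
    have hz := zf_spec p hprime
    rw [Finset.mem_Icc]
    refine ⟨hz.1, ?_⟩
    apply Nat.le_floor
    have hple : (p : ℝ) ≤ x := le_trans (by exact_mod_cast hpx) (Nat.floor_le hx0.le)
    calc ((zf p : ℕ) : ℝ) ≤ (p:ℝ) ^ γ := hlt.le
      _ ≤ x ^ γ := Real.rpow_le_rpow (Nat.cast_nonneg p) hple hγ.le
  have hcard : S.card = ∑ n ∈ Finset.Icc 1 N, (S.filter fun p => zf p = n).card :=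
    Finset.card_eq_sum_card_fiberwise hmem
  -- fiber bound
  have hfiber : ∀ n ∈ Finset.Icc 1 N, (S.filter fun p => zf p = n).card ≤ n := by
    intro n hn
    rw [Finset.mem_Icc] at hn
    have hfibpos : 0 < Nat.fib n := Nat.fib_pos.mpr hn.1
    have hsub : (S.filter fun p => zf p = n) ⊆ (Nat.fib n).primeFactors := by
      intro p hp
      rw [Finset.mem_filter] at hp
      obtain ⟨hpS, hzn⟩ := hp
      rw [hS, Finset.mem_filter] at hpS
      obtain ⟨_, hprime, _⟩ := hpS
      have hdvd : p ∣ Nat.fib n := hzn ▸ (zf_spec p hprime).2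
      exact Nat.mem_primeFactors.mpr ⟨hprime, hdvd, hfibpos.ne'⟩
    have h1 : (S.filter fun p => zf p = n).card ≤ (Nat.fib n).primeFactors.card :=
      Finset.card_le_card hsub
    have h2 : 2 ^ (Nat.fib n).primeFactors.card ≤ 2 ^ n :=
      le_trans (two_pow_primeFactors_le _ hfibpos) (fib_le_two_pow n)
    have h3 : (Nat.fib n).primeFactors.card ≤ n :=
      (Nat.pow_le_pow_iff_right one_lt_two).mp h2
    omega
  have hsum : ∑ n ∈ Finset.Icc 1 N, (S.filter fun p => zf p = n).card ≤ N * N := by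
    calc ∑ n ∈ Finset.Icc 1 N, (S.filter fun p => zf p = n).card
        ≤ ∑ n ∈ Finset.Icc 1 N, n := Finset.sum_le_sum hfiber
      _ ≤ ∑ _n ∈ Finset.Icc 1 N, N := by
          apply Finset.sum_le_sum; intro i hi; exact (Finset.mem_Icc.mp hi).2
      _ = N * N := by rw [Finset.sum_const, Nat.card_Icc]; simp [mul_comm]
  have hSN : (S.card : ℝ) ≤ (N : ℝ) * N := by
    have := le_trans (le_of_eq hcard) hsum
    exact_mod_cast this
  have hNle : (N : ℝ) ≤ x ^ γ := Nat.floor_le (Real.rpow_nonneg hx0.le γ)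
  have hxg : x ^ (2 * γ) = x ^ γ * x ^ γ := by
    rw [two_mul, Real.rpow_add hx0]
  rw [one_mul, hxg]
  exact le_trans hSN (mul_le_mul hNle hNle (Nat.cast_nonneg N) (Real.rpow_nonneg hx0.le γ))
end

section
/- The product of all primes p ≤ x satisfying z(p) < p^γ divides the product of the Fibonacci numbers F_n over all positive integers n ≤ x^γ. -/
private lemma fib_pair_shift (p : ℕ) (d : ℕ) :
    ∀ i : ℕ, ((Nat.fib i : ZMod p), (Nat.fib (i+1) : ZMod p)) =
      ((Nat.fib (i+d) : ZMod p), (Nat.fib (i+d+1) : ZMod p)) →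
      ((Nat.fib 0 : ZMod p), (Nat.fib 1 : ZMod p)) =
      ((Nat.fib d : ZMod p), (Nat.fib (d+1) : ZMod p)) := by
  intro i
  induction i with
  | zero => simp
  | succ m ih =>
    intro h
    apply ih
    have h1 : (Nat.fib (m+1) : ZMod p) = (Nat.fib (m+1+d) : ZMod p) :=
      congrArg Prod.fst h
    have h2 : (Nat.fib (m+2) : ZMod p) = (Nat.fib (m+1+d+1) : ZMod p) := by
      have := congrArg Prod.snd h; simpa using this
    have e1 : (Nat.fib m : ZMod p) = (Nat.fib (m+2) : ZMod p) - (Nat.fib (m+1) : ZMod p) := by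
      have : Nat.fib (m+2) = Nat.fib m + Nat.fib (m+1) := Nat.fib_add_two
      rw [this]; push_cast; ring
    have e2 : (Nat.fib (m+d) : ZMod p) =
        (Nat.fib (m+d+2) : ZMod p) - (Nat.fib (m+d+1) : ZMod p) := by
      have : Nat.fib (m+d+2) = Nat.fib (m+d) + Nat.fib (m+d+1) := Nat.fib_add_two
      rw [this]; push_cast; ring
    have hm1 : (Nat.fib (m+1) : ZMod p) = (Nat.fib (m+d+1) : ZMod p) := by
      rw [h1]; ring_nf
    have hm2 : (Nat.fib (m+2) : ZMod p) = (Nat.fib (m+d+2) : ZMod p) := by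
      rw [h2]; ring_nf
    have : (Nat.fib m : ZMod p) = (Nat.fib (m+d) : ZMod p) := by
      rw [e1, e2, hm1, hm2]
    exact Prod.ext this hm1

private lemma exists_dvd_fib (p : ℕ) (hp : 0 < p) : ∃ k, 0 < k ∧ p ∣ Nat.fib k := by
  haveI : NeZero p := ⟨hp.ne'⟩
  obtain ⟨i, j, hne, hf⟩ := Finite.exists_ne_map_eq_of_infinite
    (fun k : ℕ => ((Nat.fib k : ZMod p), (Nat.fib (k+1) : ZMod p)))
  wlog hij : i < j generalizing i j
  · exact this j i hne.symm hf.symm (hne.lt_or_gt.resolve_left hij)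
  obtain ⟨d, hd, rfl⟩ : ∃ d, 0 < d ∧ j = i + d :=
    ⟨j - i, Nat.sub_pos_of_lt hij, (Nat.add_sub_cancel' hij.le).symm⟩
  have := fib_pair_shift p d i (by simpa [add_assoc] using hf)
  have h0 : (Nat.fib d : ZMod p) = 0 := by
    have := congrArg Prod.fst this; simpa using this.symm
  exact ⟨d, hd, (ZMod.natCast_eq_zero_iff _ _).1 h0⟩

theorem stmt11 (γ x : ℝ) (hγ : 0 < γ) (hx : 1 ≤ x) :
    (∏ p ∈ (Finset.Icc 1 ⌊x⌋₊).filter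
        (fun p => p.Prime ∧ (zf p : ℝ) < (p : ℝ) ^ γ), p) ∣
      ∏ n ∈ Finset.Icc 1 ⌊x ^ γ⌋₊, Nat.fib n := by
  apply Finset.prod_primes_dvd
  · intro p hp
    exact (Finset.mem_filter.1 hp).2.1.prime
  · intro p hp
    obtain ⟨hmem, hprime, hz⟩ := Finset.mem_filter.1 hp
    obtain ⟨hmem1, hmem2⟩ := Finset.mem_Icc.1 hmem
    have hzmem : zf p ∈ {k | 0 < k ∧ p ∣ Nat.fib k} :=
      Nat.sInf_mem (exists_dvd_fib p hprime.pos)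
    obtain ⟨hzpos, hzdvd⟩ := hzmem
    have hpx : (p : ℝ) ≤ x := le_trans (Nat.cast_le.2 hmem2) (Nat.floor_le (by linarith))
    have hzx : (zf p : ℝ) < x ^ γ :=
      lt_of_lt_of_le hz (Real.rpow_le_rpow (Nat.cast_nonneg _) hpx hγ.le)
    have hzle : zf p ≤ ⌊x ^ γ⌋₊ := Nat.le_floor hzx.le
    exact dvd_trans hzdvd
      (Finset.dvd_prod_of_mem _ (Finset.mem_Icc.2 ⟨hzpos, hzle⟩))
end

section
/- The integers 1, 2, 5, 7, 10, 12, 13 all belong to the set 𝒜 = {gcd(n, F_n) : n ≥ 1}, while 3, 4, 6, 8, 9, 11 do not. -/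
lemma rank_dvd (k z : ℕ) (hz : 0 < z)
    (hmin : ∀ d < z + 1, d ∣ z → k ∣ Nat.fib d → d = z)
    (hkz : k ∣ Nat.fib z) {n : ℕ} (h : k ∣ Nat.fib n) : z ∣ n := by
  have hd : Nat.gcd z n ∣ z := Nat.gcd_dvd_left z n
  have hle : Nat.gcd z n ≤ z := Nat.le_of_dvd hz hd
  have hfib : k ∣ Nat.fib (Nat.gcd z n) := by
    rw [Nat.fib_gcd]; exact Nat.dvd_gcd hkz h
  have heq := hmin _ (by omega) hd hfib
  rw [← heq]; exact Nat.gcd_dvd_right z n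

lemma dvd2 {n : ℕ} (h : 3 ∣ n) : 2 ∣ Nat.fib n := Nat.fib_dvd 3 n h
lemma dvd3 {n : ℕ} (h : 4 ∣ n) : 3 ∣ Nat.fib n := Nat.fib_dvd 4 n h
lemma dvd5 {n : ℕ} (h : 5 ∣ n) : 5 ∣ Nat.fib n := Nat.fib_dvd 5 n h
lemma dvd8 {n : ℕ} (h : 6 ∣ n) : 8 ∣ Nat.fib n := Nat.fib_dvd 6 n h

lemma rank2 {n : ℕ} (h : 2 ∣ Nat.fib n) : 3 ∣ n :=
  rank_dvd 2 3 (by norm_num) (by decide) (by decide) h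
lemma rank3 {n : ℕ} (h : 3 ∣ Nat.fib n) : 4 ∣ n :=
  rank_dvd 3 4 (by norm_num) (by decide) (by decide) h
lemma rank4 {n : ℕ} (h : 4 ∣ Nat.fib n) : 6 ∣ n :=
  rank_dvd 4 6 (by norm_num) (by decide) (by decide) h
lemma rank8 {n : ℕ} (h : 8 ∣ Nat.fib n) : 6 ∣ n :=
  rank_dvd 8 6 (by norm_num) (by decide) (by decide) h
lemma rank9 {n : ℕ} (h : 9 ∣ Nat.fib n) : 12 ∣ n :=
  rank_dvd 9 12 (by norm_num) (by decide) (by decide) h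
lemma rank11 {n : ℕ} (h : 11 ∣ Nat.fib n) : 10 ∣ n :=
  rank_dvd 11 10 (by norm_num) (by decide) (by decide) h

theorem stmt15 :
    1 ∈ Afib ∧ 2 ∈ Afib ∧ 5 ∈ Afib ∧ 7 ∈ Afib ∧ 10 ∈ Afib ∧ 12 ∈ Afib ∧ 13 ∈ Afib ∧
    3 ∉ Afib ∧ 4 ∉ Afib ∧ 6 ∉ Afib ∧ 8 ∉ Afib ∧ 9 ∉ Afib ∧ 11 ∉ Afib := by
  refine ⟨⟨1, by norm_num, by decide⟩, ⟨6, by norm_num, by decide⟩,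
    ⟨5, by norm_num, by decide⟩, ⟨56, by norm_num, by decide⟩,
    ⟨30, by norm_num, by decide⟩, ⟨12, by norm_num, by decide⟩,
    ⟨91, by norm_num, by decide⟩, ?_, ?_, ?_, ?_, ?_, ?_⟩
  · rintro ⟨n, hn, hg⟩
    unfold gf at hg
    have h3n : 3 ∣ n := hg ▸ Nat.gcd_dvd_left n _
    have h3f : 3 ∣ Nat.fib n := hg ▸ Nat.gcd_dvd_right n _
    have h4 : 4 ∣ n := rank3 h3f
    have h2g : 2 ∣ Nat.gcd n (Nat.fib n) :=
      Nat.dvd_gcd (dvd_trans (by norm_num) h4) (dvd2 h3n)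
    rw [hg] at h2g; norm_num at h2g
  · rintro ⟨n, hn, hg⟩
    unfold gf at hg
    have h4n : 4 ∣ n := hg ▸ Nat.gcd_dvd_left n _
    have h4f : 4 ∣ Nat.fib n := hg ▸ Nat.gcd_dvd_right n _
    have h6 : 6 ∣ n := rank4 h4f
    have h3g : 3 ∣ Nat.gcd n (Nat.fib n) :=
      Nat.dvd_gcd (dvd_trans (by norm_num) h6) (dvd3 h4n)
    rw [hg] at h3g; norm_num at h3g
  · rintro ⟨n, hn, hg⟩
    unfold gf at hg
    have h6n : 6 ∣ n := hg ▸ Nat.gcd_dvd_left n _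
    have h6f : 6 ∣ Nat.fib n := hg ▸ Nat.gcd_dvd_right n _
    have h4 : 4 ∣ n := rank3 (dvd_trans (by norm_num) h6f)
    have h4g : 4 ∣ Nat.gcd n (Nat.fib n) :=
      Nat.dvd_gcd h4 (dvd_trans (by norm_num) (dvd8 h6n))
    rw [hg] at h4g; norm_num at h4g
  · rintro ⟨n, hn, hg⟩
    unfold gf at hg
    have h8n : 8 ∣ n := hg ▸ Nat.gcd_dvd_left n _
    have h8f : 8 ∣ Nat.fib n := hg ▸ Nat.gcd_dvd_right n _
    have h6 : 6 ∣ n := rank8 h8f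
    have h3g : 3 ∣ Nat.gcd n (Nat.fib n) :=
      Nat.dvd_gcd (dvd_trans (by norm_num) h6) (dvd3 (dvd_trans (by norm_num) h8n))
    rw [hg] at h3g; norm_num at h3g
  · rintro ⟨n, hn, hg⟩
    unfold gf at hg
    have h9n : 9 ∣ n := hg ▸ Nat.gcd_dvd_left n _
    have h9f : 9 ∣ Nat.fib n := hg ▸ Nat.gcd_dvd_right n _
    have h12 : 12 ∣ n := rank9 h9f
    have h2g : 2 ∣ Nat.gcd n (Nat.fib n) :=
      Nat.dvd_gcd (dvd_trans (by norm_num) h12) (dvd2 (dvd_trans (by norm_num) h9n))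
    rw [hg] at h2g; norm_num at h2g
  · rintro ⟨n, hn, hg⟩
    unfold gf at hg
    have h11f : 11 ∣ Nat.fib n := hg ▸ Nat.gcd_dvd_right n _
    have h10 : 10 ∣ n := rank11 h11f
    have h5 : 5 ∣ n := dvd_trans (by norm_num) h10
    have h5g : 5 ∣ Nat.gcd n (Nat.fib n) := Nat.dvd_gcd h5 (dvd5 h5)
    rw [hg] at h5g; norm_num at h5g
end

section
/- For every prime p ≠ 5, p divides gcd(ℓ(p), F_{ℓ(p)}) exactly to the first power, i.e., p divides gcd(ℓ(p), F_{ℓ(p)}) but p² does not, where ℓ(p) = p·z(p). -/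
/-! If `p ≠ 5`, then in a field of characteristic `p` the roots `α` and `β = 1 - α` of
`X² - X - 1` are distinct, and Frobenius either fixes both, giving
`α ^ (p - 1) = β ^ (p - 1) = 1`, or swaps them, giving `α ^ (p + 1) = αβ = β ^ (p + 1)`.
By Binet's formula `p ∣ F (p - 1)` or `p ∣ F (p + 1)`, so `z(p)` divides `p ∓ 1` and is prime
to `p`. Hence `ℓ(p) = p z(p)`, and `p` divides `F ℓ(p)` but `p²` does not divide `ℓ(p)`. -/

section GoldenRoot

variable {R : Type*} [CommRing R] {α : R}

lemma pow_succ_eq_fib_mul_add_fib (hα : α ^ 2 = α + 1) (n : ℕ) :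
    α ^ (n + 1) = Nat.fib (n + 1) * α + Nat.fib n := by
  induction n with
  | zero => simp
  | succ n ih =>
    rw [pow_succ, ih, Nat.fib_add_two]
    push_cast
    linear_combination (Nat.fib (n + 1) : R) * hα

lemma one_sub_sq_eq_one_sub_add_one (hα : α ^ 2 = α + 1) : (1 - α) ^ 2 = (1 - α) + 1 := by
  linear_combination hα

lemma fib_mul_sub_eq_pow_sub_pow (hα : α ^ 2 = α + 1) (n : ℕ) :
    (Nat.fib n : R) * (α - (1 - α)) = α ^ n - (1 - α) ^ n := by
  cases n with
  | zero => simp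
  | succ n =>
    rw [pow_succ_eq_fib_mul_add_fib hα,
      pow_succ_eq_fib_mul_add_fib (one_sub_sq_eq_one_sub_add_one hα)]
    ring

end GoldenRoot

lemma dvd_fib_sub_one_or_dvd_fib_add_one_of_sq_eq_add_one {K : Type*} [Field K] (p : ℕ)
    [Fact p.Prime] [CharP K p] {α : K} (hα : α ^ 2 = α + 1) (h5 : (5 : K) ≠ 0) :
    p ∣ Nat.fib (p - 1) ∨ p ∣ Nat.fib (p + 1) := by
  set β := 1 - α with hβ
  have hd : α - β ≠ 0 := by
    -- `(α - β) ^ 2 = 5`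
    intro h
    apply h5
    linear_combination (α - β) * h - 4 * hα
  have dvd_fib_of_pow_eq {n : ℕ} (h : α ^ n = β ^ n) : p ∣ Nat.fib n := by
    rw [← CharP.cast_eq_zero_iff K p]
    have := fib_mul_sub_eq_pow_sub_pow hα n
    rw [h, sub_self] at this
    exact (mul_eq_zero.mp this).resolve_right hd
  have hβp : β ^ p = 1 - α ^ p := by rw [hβ, sub_pow_char, one_pow]
  have hαp : (α ^ p - α) * (α ^ p - β) = 0 := by
    have : (α ^ p) ^ 2 = α ^ p + 1 := by
      rw [← pow_mul, mul_comm, pow_mul, hα, add_pow_char, one_pow]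
    linear_combination this - hα
  have hαβ : α * β = -1 := by linear_combination -hα
  rcases mul_eq_zero.mp hαp with h | h
  · left
    apply dvd_fib_of_pow_eq
    have hp0 : p ≠ 0 := (Fact.out : p.Prime).ne_zero
    have hαp' := pow_sub_one_mul hp0 α
    have hβp' := pow_sub_one_mul hp0 β
    rw [sub_eq_zero.mp h] at hαp' hβp
    linear_combination (α ^ (p - 1) - β ^ (p - 1)) * hαβ - β * hαp' + α * hβp' + α * hβp
  · right
    apply dvd_fib_of_pow_eq
    rw [pow_succ, pow_succ, hβp, sub_eq_zero.mp h]
    ring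

open Polynomial in
lemma Nat.Prime.dvd_fib_sub_one_or_dvd_fib_add_one {p : ℕ} (hp : p.Prime) (hp5 : p ≠ 5) :
    p ∣ Nat.fib (p - 1) ∨ p ∣ Nat.fib (p + 1) := by
  have := Fact.mk hp
  let K := AlgebraicClosure (ZMod p)
  have hdeg : (X ^ 2 - X - 1 : K[X]).degree = 2 := by compute_degree!
  obtain ⟨α, hα⟩ := IsAlgClosed.exists_root (X ^ 2 - X - 1 : K[X]) (by rw [hdeg]; decide)
  have h5 : (5 : K) ≠ 0 := by
    rw [← Nat.cast_ofNat, Ne, CharP.cast_eq_zero_iff K p,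
      Nat.prime_dvd_prime_iff_eq hp (by norm_num)]
    exact hp5
  refine dvd_fib_sub_one_or_dvd_fib_add_one_of_sq_eq_add_one p (α := α) ?_ h5
  simp only [IsRoot, eval_sub, eval_pow, eval_X, eval_one] at hα
  linear_combination hα

lemma pos_and_dvd_fib_zf {n m : ℕ} (hm : 0 < m) (h : n ∣ Nat.fib m) :
    0 < zf n ∧ n ∣ Nat.fib (zf n) :=
  Nat.sInf_mem (s := {k | 0 < k ∧ n ∣ Nat.fib k}) ⟨m, hm, h⟩

lemma zf_dvd_of_dvd_fib {n m : ℕ} (hm : 0 < m) (h : n ∣ Nat.fib m) : zf n ∣ m := by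
  obtain ⟨hz, hzf⟩ := pos_and_dvd_fib_zf hm h
  have hgcd : zf n ≤ Nat.gcd (zf n) m :=
    Nat.sInf_le ⟨Nat.gcd_pos_of_pos_left _ hz, Nat.fib_gcd _ _ ▸ Nat.dvd_gcd hzf h⟩
  rw [← Nat.gcd_eq_left_iff_dvd]
  exact le_antisymm (Nat.le_of_dvd hz (Nat.gcd_dvd_left _ _)) hgcd

lemma Nat.Prime.dvd_fib_zf {p : ℕ} (hp : p.Prime) (hp5 : p ≠ 5) : p ∣ Nat.fib (zf p) := by
  rcases hp.dvd_fib_sub_one_or_dvd_fib_add_one hp5 with h | h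
  · exact (pos_and_dvd_fib_zf (by have := hp.two_le; omega) h).2
  · exact (pos_and_dvd_fib_zf p.succ_pos h).2

lemma Nat.Prime.not_dvd_zf {p : ℕ} (hp : p.Prime) (hp5 : p ≠ 5) : ¬ p ∣ zf p := by
  intro hpz
  have hp2 := hp.two_le
  rcases hp.dvd_fib_sub_one_or_dvd_fib_add_one hp5 with h | h
  · have hpos : 0 < p - 1 := by omega
    have := Nat.le_of_dvd hpos (hpz.trans (zf_dvd_of_dvd_fib hpos h))
    omega
  · have := (Nat.dvd_add_right (dvd_refl p)).mp (hpz.trans (zf_dvd_of_dvd_fib p.succ_pos h))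
    exact hp.one_lt.ne' (Nat.dvd_one.mp this)

theorem stmt19 (p : ℕ) (hp : p.Prime) (hp5 : p ≠ 5) :
    p ∣ gf (ellf p) ∧ ¬ p ^ 2 ∣ gf (ellf p) := by
  have hz : zf p ∣ ellf p := Nat.dvd_lcm_right _ _
  have hell : ellf p = p * zf p :=
    ((Nat.Prime.coprime_iff_not_dvd hp).mpr (hp.not_dvd_zf hp5)).lcm_eq_mul
  refine ⟨Nat.dvd_gcd (Nat.dvd_lcm_left _ _)
    ((hp.dvd_fib_zf hp5).trans (Nat.fib_dvd _ _ hz)), ?_⟩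
  intro h
  have hsq : p * p ∣ p * zf p := pow_two p ▸ hell ▸ h.trans (Nat.gcd_dvd_left _ _)
  exact hp.not_dvd_zf hp5 ((Nat.mul_dvd_mul_iff_left hp.pos).mp hsq)
end
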